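/- arXiv:2002.00494 — 3 statements merged into one kernel-verified Lean document; each statement's English description precedes it below -/
import Mathlib

section
/- Let G be a subgroup of GL_2(C) such that det(L - Id) = 0 for every L ∈ G. Then G is solvable. -/
/-!
Restricted to `G`, the determinant is a homomorphism to the abelian group `ℂˣ`, so it suffices
that its kernel is abelian. For a `2 × 2` matrix, `det (A - 1) = det A - 1 - tr (A - 1)`, so every
`A` in the kernel is `1 + N` with `N` traceless and singular. For two such elements `1 + N` and
`1 + M`, the hypothesis on their product says `tr (N M) = 0`; writing out the entries, each entry
of `N M - M N` is, up to a factor `2`, an element whose square is a combination of these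
relations, hence vanishes.
-/

namespace Matrix

variable {R : Type*} [CommRing R]

theorem det_sub_one_fin_two (A : Matrix (Fin 2) (Fin 2) R) :
    (A - 1).det = A.det - 1 - (A - 1).trace := by
  simp only [det_fin_two, trace_fin_two, sub_apply, one_apply_eq, one_apply_ne, ne_eq, zero_ne_one,
    one_ne_zero, not_false_eq_true, sub_zero]
  ring

theorem commute_of_trace_eq_zero_of_det_eq_zero [IsReduced R] {N M : Matrix (Fin 2) (Fin 2) R}
    (hN : N.trace = 0) (hM : M.trace = 0) (hNd : N.det = 0) (hMd : M.det = 0)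
    (hNM : (N * M).trace = 0) : Commute N M := by
  rw [eta_fin_two N, eta_fin_two M] at *
  simp only [mul_fin_two, trace_fin_two_of, det_fin_two_of] at hN hM hNd hMd hNM
  set a := N 0 0; set b := N 0 1; set c := N 1 0; set d := N 1 1
  set e := M 0 0; set f := M 0 1; set g := M 1 0; set h := M 1 1
  have eq_zero_of_sq {x : R} (hx : x ^ 2 = 0) : x = 0 := IsReduced.eq_zero x ⟨2, hx⟩
  have hN₂ : a ^ 2 + b * c = 0 := by linear_combination a * hN - hNd
  have hM₂ : e ^ 2 + f * g = 0 := by linear_combination e * hM - hMd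
  have hNM₂ : 2 * a * e + b * g + c * f = 0 := by linear_combination hNM - h * hN + a * hM
  have h₁ : b * g - c * f = 0 := eq_zero_of_sq <| by
    linear_combination (b * g + c * f - 2 * a * e) * hNM₂ + 4 * a ^ 2 * hM₂ - 4 * f * g * hN₂
  have h₂ : a * f - b * e = 0 := eq_zero_of_sq <| by
    linear_combination f ^ 2 * hN₂ + b ^ 2 * hM₂ - b * f * hNM₂
  have h₃ : c * e - a * g = 0 := eq_zero_of_sq <| by
    linear_combination g ^ 2 * hN₂ + c ^ 2 * hM₂ - c * g * hNM₂
  rw [Commute, SemiconjBy, mul_fin_two, mul_fin_two]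
  ext i j
  fin_cases i <;> fin_cases j <;>
    simp only [Fin.zero_eta, Fin.mk_one, Fin.isValue, of_apply, cons_val', cons_val_zero,
      cons_val_one, cons_val_fin_one]
  · linear_combination h₁
  · linear_combination 2 * h₂ + b * hM - f * hN
  · linear_combination 2 * h₃ + g * hN - c * hM
  · linear_combination -h₁

theorem commute_of_det_sub_one_eq_zero [IsReduced R] {A B : Matrix (Fin 2) (Fin 2) R}
    (hA : A.det = 1) (hB : B.det = 1) (hA₁ : (A - 1).det = 0) (hB₁ : (B - 1).det = 0)
    (hAB₁ : (A * B - 1).det = 0) : Commute A B := by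
  have trace_eq_zero {C : Matrix (Fin 2) (Fin 2) R} (hC : C.det = 1) (hC₁ : (C - 1).det = 0) :
      (C - 1).trace = 0 := by
    rwa [det_sub_one_fin_two, hC, sub_self, zero_sub, neg_eq_zero] at hC₁
  have hA₀ := trace_eq_zero hA hA₁
  have hB₀ := trace_eq_zero hB hB₁
  have hprod : ((A - 1) * (B - 1)).trace = 0 := by
    have hAB := trace_eq_zero (by rw [det_mul, hA, hB, one_mul]) hAB₁
    have : A * B - 1 = (A - 1) + (B - 1) + (A - 1) * (B - 1) := by noncomm_ring
    rwa [this, trace_add, trace_add, hA₀, hB₀, zero_add, zero_add] at hAB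
  have := commute_of_trace_eq_zero_of_det_eq_zero hA₀ hB₀ hA₁ hB₁ hprod
  simpa using (this.add_right (Commute.one_right _)).add_left (Commute.one_left _)

end Matrix

/-- A subgroup of `GL₂(ℂ)` all of whose elements `L` satisfy `det (L - Id) = 0`
is solvable. -/
theorem solvable_of_det_sub_one_eq_zero
    (G : Subgroup (Matrix.GeneralLinearGroup (Fin 2) ℂ))
    (h : ∀ g ∈ G, ((g : Matrix (Fin 2) (Fin 2) ℂ) - 1).det = 0) :
    IsSolvable G := by
  let detG : G →* ℂˣ := Matrix.GeneralLinearGroup.det.comp G.subtype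
  have det_eq_one (x : detG.ker) : (x.1.1 : Matrix (Fin 2) (Fin 2) ℂ).det = 1 := by
    simpa [detG] using congrArg Units.val (detG.mem_ker.mp x.2)
  have : Group.IsSolvable detG.ker := Group.isSolvable_of_comm fun x y => by
    have := Matrix.commute_of_det_sub_one_eq_zero (det_eq_one x) (det_eq_one y)
      (h _ x.1.2) (h _ y.1.2) (by simpa using h _ (x * y).1.2)
    exact Subtype.ext (Subtype.ext (Units.ext this.eq))
  exact Group.isSolvable_of_ker_le_range detG.ker.subtype detG (by simp)
end

section
/- Let Λ be a lattice in C^2 and let Γ be a group of automorphisms of the torus A = C^2/Λ, each induced by an affine map z ↦ L(g)(z) + T(g) with L(g)(Λ) = Λ. If the action of Γ on A is free (every non-identity element has no fixed point), then Γ is solvable. -/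
/-!
If an affine map of `k²` has no fixed point, its linear part has eigenvalue `1`. So for a
fixed-point-free affine action of `Γ`, the linear parts of the elements of the kernel `K` of
`det ∘ linear` are unipotent elements of `SL₂` whose products are again unipotent, and such
elements commute. Elements with trivial linear part are translations, which commute too and
determine the element since the action is faithful. Hence `K` is metabelian, and `Γ / K` embeds
in `kˣ`.
-/

open Function

/-- `(a, b, c) ↦ a ^ 2 + b * c` is minus the determinant on traceless `2 × 2` matrices, with polar
form `2 * a * d + b * f + c * e`; orthogonal isotropic vectors of it are proportional. -/
theorem minors_eq_zero_of_isotropic_of_orthogonal {R : Type*} [CommRing R] [IsReduced R]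
    {a b c d e f : R} (hN : a ^ 2 + b * c = 0) (hM : d ^ 2 + e * f = 0)
    (hNM : 2 * a * d + b * f + c * e = 0) :
    b * f = c * e ∧ a * e = b * d ∧ c * d = a * f := by
  refine ⟨sub_eq_zero.mp (eq_zero_of_pow_eq_zero (n := 2) ?_),
    sub_eq_zero.mp (eq_zero_of_pow_eq_zero (n := 2) ?_),
    sub_eq_zero.mp (eq_zero_of_pow_eq_zero (n := 2) ?_)⟩
  · linear_combination (b * f + c * e - 2 * a * d) * hNM + 4 * d ^ 2 * hN - 4 * b * c * hM
  · linear_combination e ^ 2 * hN + b ^ 2 * hM - b * e * hNM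
  · linear_combination f ^ 2 * hN + c ^ 2 * hM - c * f * hNM

/-- With `A = 1 + N` and `B = 1 + M`, the hypotheses say that `N` and `M` are traceless, nilpotent
and orthogonal for the trace form. -/
theorem Matrix.commute_of_det_sub_one_eq_zero_s4 {R : Type*} [CommRing R] [IsReduced R]
    {A B : Matrix (Fin 2) (Fin 2) R} (hA : A.det = 1) (hA1 : (A - 1).det = 0)
    (hB : B.det = 1) (hB1 : (B - 1).det = 0) (hAB1 : (A * B - 1).det = 0) : Commute A B := by
  obtain ⟨p, q, r, s, rfl⟩ : ∃ p q r s, A = !![p, q; r, s] := ⟨_, _, _, _, A.eta_fin_two⟩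
  obtain ⟨t, u, v, w, rfl⟩ : ∃ t u v w, B = !![t, u; v, w] := ⟨_, _, _, _, B.eta_fin_two⟩
  simp only [Matrix.det_fin_two_of, Matrix.one_fin_two, Matrix.of_sub_of, Matrix.mul_fin_two,
    Matrix.sub_cons, Matrix.head_cons, Matrix.tail_cons, sub_zero, sub_self, Matrix.zero_empty] at *
  obtain rfl : s = 2 - p := by linear_combination hA - hA1
  obtain rfl : w = 2 - t := by linear_combination hB - hB1
  obtain ⟨h1, h2, h3⟩ := minors_eq_zero_of_isotropic_of_orthogonal (a := p - 1) (b := q) (c := r)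
    (d := t - 1) (e := u) (f := v) (by linear_combination -hA1) (by linear_combination -hB1)
    (by linear_combination (p * (2 - p) - q * r) * hB + hA - hAB1)
  simp only [commute_iff_eq, Matrix.mul_fin_two, EmbeddingLike.apply_eq_iff_eq, Matrix.vecCons_inj,
    and_true]
  exact ⟨⟨by linear_combination h1, by linear_combination 2 * h2⟩,
    by linear_combination 2 * h3, by linear_combination -h1⟩

theorem LinearMap.commute_of_det_sub_one_eq_zero_s4 {R : Type*} [CommRing R] [IsReduced R]
    {f g : Module.End R (Fin 2 → R)} (hf : f.det = 1) (hf1 : (f - 1).det = 0)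
    (hg : g.det = 1) (hg1 : (g - 1).det = 0) (hfg1 : (f * g - 1).det = 0) : Commute f g := by
  have hdet (φ : Module.End R (Fin 2 → R)) : (toMatrixAlgEquiv' φ).det = φ.det := det_toMatrix' φ
  have hsub (φ : Module.End R (Fin 2 → R)) :
      toMatrixAlgEquiv' φ - 1 = toMatrixAlgEquiv' (φ - 1) := by
    rw [map_sub, map_one]
  have key := Matrix.commute_of_det_sub_one_eq_zero_s4 (A := toMatrixAlgEquiv' f)
    (B := toMatrixAlgEquiv' g) (by rwa [hdet]) (by rwa [hsub, hdet]) (by rwa [hdet])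
    (by rwa [hsub, hdet]) (by rwa [← map_mul, hsub, hdet])
  simpa using key.map toMatrixAlgEquiv'.symm

theorem AffineMap.exists_isFixedPt_of_det_linear_sub_one_ne_zero {k V : Type*} [Field k]
    [AddCommGroup V] [Module k V] [FiniteDimensional k V] (f : V →ᵃ[k] V)
    (h : (f.linear - 1).det ≠ 0) : ∃ z, IsFixedPt f z := by
  obtain ⟨z, hz⟩ := ((Module.End.isUnit_iff _).mp
    ((LinearMap.isUnit_iff_isUnit_det _).mpr h.isUnit)).surjective (-f 0)
  refine ⟨z, ?_⟩
  rw [IsFixedPt, f.decomp]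
  simp only [LinearMap.sub_apply, Module.End.one_apply] at hz
  simp only [Pi.add_apply]
  linear_combination (norm := module) hz

theorem AffineEquiv.commute_of_linear_eq_one {k V : Type*} [Ring k] [AddCommGroup V] [Module k V]
    {e e' : V ≃ᵃ[k] V} (he : e.linear = 1) (he' : e'.linear = 1) : Commute e e' := by
  have htrans : ∀ {e : V ≃ᵃ[k] V}, e.linear = 1 → ∀ z, e z = z + e 0 := by
    intro e he z
    simpa [he] using congrFun e.toAffineMap.decomp z
  ext z
  rw [AffineEquiv.coe_mul, AffineEquiv.coe_mul, comp_apply, comp_apply, htrans he (e' z),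
    htrans he' z, htrans he' (e z), htrans he z]
  abel

theorem Group.isSolvable_of_comm_ker_of_comm_range {G H : Type*} [Group G] [Group H] (f : G →* H)
    (hker : ∀ a ∈ f.ker, ∀ b ∈ f.ker, Commute a b) (hrange : ∀ a b, Commute (f a) (f b)) :
    Group.IsSolvable G := by
  have : Group.IsSolvable f.ker :=
    Group.isSolvable_of_comm fun a b ↦ Subtype.ext (hker a a.2 b b.2).eq
  have : Group.IsSolvable f.range := Group.isSolvable_of_comm <| by
    rintro ⟨_, a, rfl⟩ ⟨_, b, rfl⟩
    exact Subtype.ext (hrange a b).eq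
  exact Group.isSolvable_of_ker_le_range f.ker.subtype f.rangeRestrict (by simp)

theorem MonoidHom.injective_of_forall_ne_one_apply_ne {k V Γ : Type*} [Ring k] [AddCommGroup V]
    [Module k V] [Group Γ] (ρ : Γ →* (V ≃ᵃ[k] V)) (hρ : ∀ g ≠ 1, ∀ z, ρ g z ≠ z) :
    Injective ρ :=
  (injective_iff_map_eq_one ρ).mpr fun g hg ↦ by_contra fun h ↦ hρ g h 0 (by rw [hg]; rfl)

theorem det_linear_sub_one_eq_zero_of_forall_ne_one_apply_ne {k V Γ : Type*} [Field k]
    [AddCommGroup V] [Module k V] [FiniteDimensional k V] [Nontrivial V] [Group Γ]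
    (ρ : Γ →* (V ≃ᵃ[k] V)) (hρ : ∀ g ≠ 1, ∀ z, ρ g z ≠ z) (g : Γ) :
    ((ρ g).linear.toLinearMap - 1).det = 0 := by
  by_cases hg : g = 1
  · simp [hg, AffineEquiv.one_def, ← Module.End.one_eq_id]
  · by_contra h
    obtain ⟨z, hz⟩ := (ρ g).toAffineMap.exists_isFixedPt_of_det_linear_sub_one_ne_zero h
    exact hρ g hg z hz

theorem isSolvable_of_fixedPointFree_affine_fin_two {k Γ : Type*} [Field k] [Group Γ]
    (ρ : Γ →* ((Fin 2 → k) ≃ᵃ[k] (Fin 2 → k))) (hρ : ∀ g ≠ 1, ∀ z, ρ g z ≠ z) :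
    Group.IsSolvable Γ := by
  let lin := AffineEquiv.linearHom.comp ρ
  let K := (LinearEquiv.det.comp lin).ker
  have : Group.IsSolvable K := by
    refine Group.isSolvable_of_comm_ker_of_comm_range (lin.comp K.subtype) ?_ ?_
    · intro a ha b hb
      refine Subtype.ext (ρ.injective_of_forall_ne_one_apply_ne hρ ?_)
      simpa using (AffineEquiv.commute_of_linear_eq_one ha hb).eq
    · intro a b
      have hdet (c : K) : (lin c).toLinearMap.det = 1 := by
        simpa [← LinearEquiv.coe_det] using congrArg Units.val c.2
      have hsub (c : Γ) : ((lin c).toLinearMap - 1).det = 0 :=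
        det_linear_sub_one_eq_zero_of_forall_ne_one_apply_ne ρ hρ c
      have key := LinearMap.commute_of_det_sub_one_eq_zero_s4 (hdet a) (hsub a) (hdet b) (hsub b)
        (by rw [← LinearEquiv.coe_toLinearMap_mul, ← map_mul]; exact hsub (a * b))
      exact LinearEquiv.toLinearMap_injective
        (by simpa [LinearEquiv.coe_toLinearMap_mul] using key.eq)
  exact Group.isSolvable_of_ker_le_range K.subtype (LinearEquiv.det.comp lin) K.range_subtype.ge

theorem solvable_of_free_action_on_torus_dim_two_general (Γ : Type*) [Group Γ]
    (Λ : AddSubgroup (Fin 2 → ℂ))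
    (L : Γ → ((Fin 2 → ℂ) ≃ₗ[ℂ] (Fin 2 → ℂ))) (T : Γ → (Fin 2 → ℂ))
    (hmul : ∀ g h : Γ, ∀ v, L (g * h) v = L g (L h v))
    (hT : ∀ g h : Γ, T (g * h) = L g (T h) + T g)
    (hfree : ∀ g : Γ, g ≠ 1 → ∀ z : Fin 2 → ℂ, L g z + T g - z ∉ Λ) :
    IsSolvable Γ := by
  let ρ : Γ →* ((Fin 2 → ℂ) ≃ᵃ[ℂ] (Fin 2 → ℂ)) := MonoidHom.mk'
    (fun g ↦ (L g).toAffineEquiv.trans (AffineEquiv.constVAdd ℂ _ (T g)))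
    fun g h ↦ AffineEquiv.ext fun z ↦ by simp [hmul, hT, add_left_comm]
  refine isSolvable_of_fixedPointFree_affine_fin_two ρ fun g hg z hz ↦ hfree g hg z ?_
  have hzero : L g z + T g - z = 0 := by simpa [ρ, sub_eq_zero, add_comm] using hz
  exact hzero ▸ Λ.zero_mem

/-- Let `Γ` act on the torus `A = ℂ²/Λ` by automorphisms induced by affine maps
`z ↦ L g z + T g` with `L g` preserving the lattice `Λ`. If the action on `A` is free,
then `Γ` is solvable. -/
theorem solvable_of_free_action_on_torus_dim_two (Γ : Type*) [Group Γ]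
    (Λ : AddSubgroup (Fin 2 → ℂ))
    (L : Γ → ((Fin 2 → ℂ) ≃ₗ[ℂ] (Fin 2 → ℂ))) (T : Γ → (Fin 2 → ℂ))
    (hmul : ∀ g h : Γ, ∀ v, L (g * h) v = L g (L h v))
    (hT : ∀ g h : Γ, T (g * h) = L g (T h) + T g)
    (hone : ∀ v, L 1 v = v) (hTone : T 1 = 0)
    (hΛ : ∀ g : Γ, ∀ v ∈ Λ, L g v ∈ Λ)
    (hfree : ∀ g : Γ, g ≠ 1 → ∀ z : Fin 2 → ℂ, L g z + T g - z ∉ Λ) :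
    IsSolvable Γ :=
  solvable_of_free_action_on_torus_dim_two_general Γ Λ L T hmul hT hfree
end

section
/- Let F be a holomorphic automorphism of H × C, where H is the upper half-plane. Then F preserves the projection to H: F(z,w) = (u(z), a(z)w + b(z)) where u is a holomorphic automorphism of H and a, b are holomorphic functions on H with a nowhere vanishing. -/
/-!
For fixed `z`, the first component `w ↦ (F (z, w)).1` is an entire function with values in the
upper half-plane, hence constant by Liouville's theorem applied to `(· + i)⁻¹`. So `F` and its
inverse `G` preserve the fibres `{z} × ℂ`, and on each fibre they restrict to mutually inverse
entire functions `f`, `g`. Such an `f` is affine: since `f` is proper, `h(z) = 1 / f(1 / z)`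
extends holomorphically to `0` with `h(0) = 0`, and `h'(0) ≠ 0` because the analogous
extension for `g` is inverse to `h` near `0`. Hence `(f ζ - f 0) / ζ → h'(0)⁻¹` as `ζ → ∞`,
and Liouville's theorem makes this slope constant.
-/

open Set Filter Bornology Topology

theorem Differentiable.apply_eq_apply_of_im_pos {E : Type*} [NormedAddCommGroup E]
    [NormedSpace ℂ E] {f : E → ℂ} (hf : Differentiable ℂ f) (him : ∀ w, 0 < (f w).im)
    (z w : E) : f z = f w := by
  have hne : ∀ w, f w + Complex.I ≠ 0 := fun w h => by
    have := congrArg Complex.im h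
    simp only [Complex.add_im, Complex.I_im, Complex.zero_im] at this
    linarith [him w]
  have hbdd : IsBounded (range fun w => (f w + Complex.I)⁻¹) := by
    refine (Metric.isBounded_closedBall (x := (0 : ℂ)) (r := 1)).subset ?_
    rintro _ ⟨w, rfl⟩
    rw [mem_closedBall_zero_iff, norm_inv]
    refine inv_le_one_of_one_le₀ ?_
    calc (1 : ℝ) ≤ (f w + Complex.I).im := by simp [(him w).le]
      _ ≤ ‖f w + Complex.I‖ := Complex.im_le_norm _
  simpa using ((hf.add_const _).inv hne).apply_eq_apply_of_bounded hbdd z w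

/-- `f` read in the coordinate `z ↦ z⁻¹` at `∞`, with the value `0` (standing for `∞`) put in
by hand at `0`. -/
noncomputable def inversionConj (f : ℂ → ℂ) : ℂ → ℂ :=
  Function.update (fun z => (f z⁻¹)⁻¹) 0 0

section inversionConj

variable {f g : ℂ → ℂ}

theorem inversionConj_zero (f : ℂ → ℂ) : inversionConj f 0 = 0 := by
  simp [inversionConj]

theorem inversionConj_of_ne {z : ℂ} (hz : z ≠ 0) : inversionConj f z = (f z⁻¹)⁻¹ := by
  simp [inversionConj, hz]

theorem analyticAt_inversionConj (hf : Differentiable ℂ f)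
    (hinf : Tendsto f (cobounded ℂ) (cobounded ℂ)) : AnalyticAt ℂ (inversionConj f) 0 := by
  have hinv : Tendsto (fun z => f z⁻¹) (𝓝[≠] 0) (cobounded ℂ) :=
    hinf.comp tendsto_inv₀_nhdsNE_zero
  refine Complex.analyticAt_of_differentiable_on_punctured_nhds_of_continuousAt ?_ ?_
  · filter_upwards [self_mem_nhdsWithin, hinv.eventually_ne_cobounded 0] with z hz hfz
    have heq : inversionConj f =ᶠ[𝓝 z] fun z => (f z⁻¹)⁻¹ := by
      filter_upwards [isOpen_ne.mem_nhds hz] with x hx using inversionConj_of_ne hx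
    exact (((hf _).comp z (differentiableAt_inv hz)).inv hfz).congr_of_eventuallyEq heq
  · rw [inversionConj, continuousAt_update_same]
    exact tendsto_inv₀_cobounded.comp hinv

theorem inversionConj_comp_eventuallyEq (hfg : ∀ ζ, f (g ζ) = ζ)
    (hinf : Tendsto g (cobounded ℂ) (cobounded ℂ)) :
    inversionConj f ∘ inversionConj g =ᶠ[𝓝 0] id := by
  have hne : ∀ᶠ z in 𝓝[≠] 0, g z⁻¹ ≠ 0 :=
    (hinf.comp tendsto_inv₀_nhdsNE_zero).eventually_ne_cobounded 0
  filter_upwards [eventually_nhdsWithin_iff.mp hne] with z hz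
  rcases eq_or_ne z 0 with rfl | hz0
  · simp [inversionConj_zero]
  · simp [inversionConj_of_ne hz0, inversionConj_of_ne (inv_ne_zero (hz hz0)), hfg]

theorem deriv_inversionConj_ne_zero (hf : Differentiable ℂ f) (hg : Differentiable ℂ g)
    (hfg : ∀ ζ, f (g ζ) = ζ) (hinf_f : Tendsto f (cobounded ℂ) (cobounded ℂ))
    (hinf_g : Tendsto g (cobounded ℂ) (cobounded ℂ)) : deriv (inversionConj f) 0 ≠ 0 := by
  have hf' : HasDerivAt (inversionConj f) (deriv (inversionConj f) 0) (inversionConj g 0) := by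
    rw [inversionConj_zero]
    exact (analyticAt_inversionConj hf hinf_f).differentiableAt.hasDerivAt
  have hcomp := hf'.comp 0 (analyticAt_inversionConj hg hinf_g).differentiableAt.hasDerivAt
  have hid := hcomp.congr_of_eventuallyEq (inversionConj_comp_eventuallyEq hfg hinf_g).symm
  exact left_ne_zero_of_mul_eq_one (hid.unique (hasDerivAt_id 0))

theorem tendsto_dslope_cobounded (hf : Differentiable ℂ f)
    (hinf : Tendsto f (cobounded ℂ) (cobounded ℂ)) (hd : deriv (inversionConj f) 0 ≠ 0) :
    Tendsto (dslope f 0) (cobounded ℂ) (𝓝 (deriv (inversionConj f) 0)⁻¹) := by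
  have hslope := hasDerivAt_iff_tendsto_slope.mp
    (analyticAt_inversionConj hf hinf).differentiableAt.hasDerivAt
  -- for `ζ ≠ 0`, `dslope f 0 ζ = (slope (inversionConj f) 0 ζ⁻¹)⁻¹ - ζ⁻¹ * f 0`
  have hlim := ((hslope.comp tendsto_inv₀_cobounded').inv₀ hd).sub
    ((tendsto_inv₀_cobounded (α := ℂ)).mul_const (f 0))
  rw [zero_mul, sub_zero] at hlim
  refine hlim.congr' ?_
  filter_upwards [eventually_ne_cobounded 0, hinf.eventually_ne_cobounded 0] with ζ hζ hfζ
  rw [Function.comp_apply, dslope_of_ne _ hζ, slope_def_field, slope_def_field,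
    inversionConj_of_ne (inv_ne_zero hζ), inversionConj_zero, inv_inv]
  field_simp
  ring

theorem Differentiable.eq_mul_add_of_inverse (hf : Differentiable ℂ f)
    (hg : Differentiable ℂ g) (hgf : Function.LeftInverse g f)
    (hfg : Function.RightInverse g f) (w : ℂ) : f w = (f 1 - f 0) * w + f 0 := by
  let e : ℂ ≃ₜ ℂ := ⟨⟨f, g, hgf, hfg⟩, hf.continuous, hg.continuous⟩
  have hinf_f : Tendsto f (cobounded ℂ) (cobounded ℂ) := by
    rw [Metric.cobounded_eq_cocompact]; exact e.map_cocompact.le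
  have hinf_g : Tendsto g (cobounded ℂ) (cobounded ℂ) := by
    rw [Metric.cobounded_eq_cocompact]; exact e.symm.map_cocompact.le
  have hdslope : Differentiable ℂ (dslope f 0) := fun w =>
    ((Complex.differentiableOn_dslope univ_mem).2 hf.differentiableOn).differentiableAt univ_mem
  have hlim := tendsto_dslope_cobounded hf hinf_f
    (deriv_inversionConj_ne_zero hf hg hfg hinf_f hinf_g)
  rw [Metric.cobounded_eq_cocompact] at hlim
  have hconst := fun w => hdslope.apply_eq_of_tendsto_cocompact w hlim
  have hw := sub_smul_dslope f 0 w
  have h1 := sub_smul_dslope f 0 1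
  simp only [sub_zero, smul_eq_mul, one_mul, hconst] at hw h1
  rw [← h1]
  linear_combination -hw

end inversionConj

def PreservesFibersOn {α β γ δ : Type*} (F : α × β → γ × δ) (U : Set α) : Prop :=
  ∀ z ∈ U, ∀ w w', (F (z, w)).1 = (F (z, w')).1

section PreservesFibersOn

variable {α β γ δ : Type*} {F : α × β → γ × δ} {G : γ × δ → α × β} {U : Set α} {V : Set γ}
  {z : α}

theorem PreservesFibersOn.fst_apply_fst (hG : PreservesFibersOn G V)
    (hFS : MapsTo F (U ×ˢ univ) (V ×ˢ univ)) (hGF : ∀ p ∈ U ×ˢ univ, G (F p) = p)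
    (hz : z ∈ U) (w : β) (ξ : δ) : (G ((F (z, w)).1, ξ)).1 = z := by
  rw [hG _ (hFS ⟨hz, trivial⟩).1 ξ (F (z, w)).2, Prod.mk.eta, hGF _ ⟨hz, trivial⟩]

theorem PreservesFibersOn.leftInverse_fiber (hF : PreservesFibersOn F U)
    (hGF : ∀ p ∈ U ×ˢ univ, G (F p) = p) (hz : z ∈ U) (w₀ : β) :
    Function.LeftInverse (fun ξ => (G ((F (z, w₀)).1, ξ)).2) (fun w => (F (z, w)).2) :=
  fun w => by dsimp only; rw [hF z hz w₀ w, Prod.mk.eta, hGF _ ⟨hz, trivial⟩]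

theorem PreservesFibersOn.rightInverse_fiber (hG : PreservesFibersOn G V)
    (hFS : MapsTo F (U ×ˢ univ) (V ×ˢ univ)) (hGF : ∀ p ∈ U ×ˢ univ, G (F p) = p)
    (hFG : ∀ p ∈ V ×ˢ univ, F (G p) = p) (hz : z ∈ U) (w₀ : β) :
    Function.RightInverse (fun ξ => (G ((F (z, w₀)).1, ξ)).2) (fun w => (F (z, w)).2) := by
  intro ξ
  obtain ⟨p, hp⟩ : ∃ p, G ((F (z, w₀)).1, ξ) = p := ⟨_, rfl⟩
  have hp₁ := hG.fst_apply_fst hFS hGF hz w₀ ξ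
  simp only [hp] at hp₁ ⊢
  rw [← hp₁, Prod.mk.eta, ← hp, hFG ((F (z, w₀)).1, ξ) ⟨(hFS ⟨hz, trivial⟩).1, trivial⟩]

end PreservesFibersOn

section Fibers

variable {E E' F' : Type*} [NormedAddCommGroup E] [NormedSpace ℂ E]
  [NormedAddCommGroup E'] [NormedSpace ℂ E'] [NormedAddCommGroup F'] [NormedSpace ℂ F']
  {U : Set E}

theorem DifferentiableOn.differentiable_fiber {Φ : E × E' → F'} (hU : IsOpen U)
    (hΦ : DifferentiableOn ℂ Φ (U ×ˢ univ)) {z : E} (hz : z ∈ U) :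
    Differentiable ℂ fun w => Φ (z, w) := fun w =>
  (hΦ.differentiableAt ((hU.prod isOpen_univ).mem_nhds ⟨hz, trivial⟩)).comp w
    ((differentiableAt_const z).prodMk differentiableAt_id)

theorem DifferentiableOn.comp_mk_const {Φ : E × E' → F'} (hΦ : DifferentiableOn ℂ Φ (U ×ˢ univ))
    (c : E') : DifferentiableOn ℂ (fun z => Φ (z, c)) U :=
  hΦ.comp (differentiable_id.prodMk (differentiable_const c)).differentiableOn
    fun _ hz => ⟨hz, trivial⟩

theorem preservesFibersOn_of_mapsTo_upperHalfPlane {Φ : E × E' → ℂ × F'} (hU : IsOpen U)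
    (hΦ : DifferentiableOn ℂ Φ (U ×ˢ univ))
    (hmaps : MapsTo Φ (U ×ˢ univ) ({z : ℂ | 0 < z.im} ×ˢ univ)) : PreservesFibersOn Φ U :=
  fun _ hz w w' =>
    (differentiable_fst.comp (hΦ.differentiable_fiber hU hz)).apply_eq_apply_of_im_pos
      (fun _ => (hmaps ⟨hz, trivial⟩).1) w w'

end Fibers

/-- Every holomorphic automorphism `F` of `ℍ × ℂ` (with holomorphic inverse `G`) preserves
the projection to the upper half-plane `ℍ`: it has the form
`F(z,w) = (u z, a z * w + b z)` with `u` a holomorphic automorphism of `ℍ` and `a`, `b`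
holomorphic on `ℍ`, `a` nowhere vanishing. -/
theorem automorphism_of_H_times_C (F G : ℂ × ℂ → ℂ × ℂ)
    (H : Set ℂ) (hH : H = {z : ℂ | 0 < z.im})
    (S : Set (ℂ × ℂ)) (hS : S = H ×ˢ (univ : Set ℂ))
    (hF : DifferentiableOn ℂ F S) (hG : DifferentiableOn ℂ G S)
    (hFS : MapsTo F S S) (hGS : MapsTo G S S)
    (hGF : ∀ p ∈ S, G (F p) = p) (hFG : ∀ p ∈ S, F (G p) = p) :
    ∃ u a b : ℂ → ℂ, DifferentiableOn ℂ u H ∧ DifferentiableOn ℂ a H ∧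
      DifferentiableOn ℂ b H ∧ (∀ z ∈ H, a z ≠ 0) ∧ BijOn u H H ∧
      ∀ z ∈ H, ∀ w : ℂ, F (z, w) = (u z, a z * w + b z) := by
  subst hS
  have hHo : IsOpen H := hH ▸ isOpen_lt continuous_const Complex.continuous_im
  have hFp := preservesFibersOn_of_mapsTo_upperHalfPlane hHo hF (hH ▸ hFS)
  have hGp := preservesFibersOn_of_mapsTo_upperHalfPlane hHo hG (hH ▸ hGS)
  have hfiber : ∀ z ∈ H, ∀ w, (F (z, w)).2 =
      ((F (z, 1)).2 - (F (z, 0)).2) * w + (F (z, 0)).2 := fun z hz =>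
    (hF.differentiable_fiber hHo hz).snd.eq_mul_add_of_inverse
      (hG.differentiable_fiber hHo (hFS ⟨hz, trivial⟩).1).snd (hFp.leftInverse_fiber hGF hz 0)
      (hGp.rightInverse_fiber hFS hGF hFG hz 0)
  refine ⟨fun z => (F (z, 0)).1, fun z => (F (z, 1)).2 - (F (z, 0)).2, fun z => (F (z, 0)).2,
    differentiable_fst.comp_differentiableOn (hF.comp_mk_const 0),
    (differentiable_snd.comp_differentiableOn (hF.comp_mk_const 1)).sub
      (differentiable_snd.comp_differentiableOn (hF.comp_mk_const 0)),
    differentiable_snd.comp_differentiableOn (hF.comp_mk_const 0), fun z hz h => ?_, ?_,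
    fun z hz w => Prod.ext (hFp z hz w 0) (hfiber z hz w)⟩
  · exact one_ne_zero ((hFp.leftInverse_fiber hGF hz 0).injective (sub_eq_zero.mp h))
  · refine InvOn.bijOn (f' := fun ζ => (G (ζ, 0)).1)
      ⟨fun z hz => hGp.fst_apply_fst hFS hGF hz 0 0, fun ζ hζ => hFp.fst_apply_fst hGS hFG hζ 0 0⟩
      (fun z hz => (hFS ⟨hz, trivial⟩).1) (fun ζ hζ => (hGS ⟨hζ, trivial⟩).1)
end
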